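/- For every j ≥ 0, there exists an integer p with 1 ≤ p < 2^j (or p = 1 when 2^j ≤ 2), gcd(p, 2^j) = 1, such that all partial quotients of the continued fraction expansion of p/2^j are at most 3. -/

import Mathlib

open Matrix

/-- The generator matrix ((0,1),(1,a)). -/
def genM (a : ℕ) : Matrix (Fin 2) (Fin 2) ℤ := !![0, 1; 1, (a : ℤ)]

/-- Product of generators along a finite sequence. -/
def prodM (l : List ℕ) : Matrix (Fin 2) (Fin 2) ℤ := (l.map genM).prod

/-- Finite continued fraction [a₁,...,a_k] = 1/(a₁ + 1/(a₂ + ⋯ + 1/a_k)). -/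
def cf : List ℕ → ℚ
  | [] => 0
  | a :: t => 1 / ((a : ℚ) + cf t)

/-!
Niederreiter's folding argument, in matrix form. The continuant `K(l)` of a word `l` is the entry
`prodM l 1 1`, and `cf l = prodM l 0 1 / prodM l 1 1` in lowest terms since `det (prodM l) = ±1`.
Because `prodM (T ++ G ++ Tʳ) = prodM T * prodM G * (prodM T)ᵀ`, a middle word `G` whose matrix
is `c • !![1, b; 4 - b, 4]` gives `K(T G Tʳ) = c * K(T 1 1)²`. The words `1 3`, `1 1 1 2` and
`1 1 3 2` have this shape with `c = 1, 2, 4`, so from a framed word `1 1 S 1 1` of continuant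
`2 ^ m`, folding `T = 1 1 S` gives framed words of continuant `2 ^ (2m)`, `2 ^ (2m+1)` and
`2 ^ (2m+2)`. Starting from `2 ^ 3`, `2 ^ 4` and `2 ^ 11` this reaches every `2 ^ m` with `3 ≤ m ≠ 5`.
-/

lemma prodM_nil : prodM [] = 1 := rfl

lemma prodM_cons (a : ℕ) (l : List ℕ) : prodM (a :: l) = genM a * prodM l := by
  simp [prodM]

lemma prodM_append (l₁ l₂ : List ℕ) : prodM (l₁ ++ l₂) = prodM l₁ * prodM l₂ := by
  simp [prodM]

lemma transpose_genM (a : ℕ) : (genM a)ᵀ = genM a := by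
  ext i j; fin_cases i <;> fin_cases j <;> rfl

lemma prodM_reverse (l : List ℕ) : prodM l.reverse = (prodM l)ᵀ := by
  simp [prodM, transpose_list_prod, Function.comp_def, transpose_genM]

lemma prodM_cons_apply_zero_one (a : ℕ) (l : List ℕ) :
    prodM (a :: l) 0 1 = prodM l 1 1 := by
  simp [prodM_cons, genM, mul_apply, Fin.sum_univ_two]

lemma prodM_cons_apply_one_one (a : ℕ) (l : List ℕ) :
    prodM (a :: l) 1 1 = prodM l 0 1 + a * prodM l 1 1 := by
  simp [prodM_cons, genM, mul_apply, Fin.sum_univ_two]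

lemma det_prodM (l : List ℕ) : (prodM l).det = (-1) ^ l.length := by
  induction l with
  | nil => simp [prodM_nil]
  | cons a l ih =>
    rw [prodM_cons, det_mul, ih, genM, det_fin_two_of, List.length_cons, pow_succ]
    ring

lemma isCoprime_prodM_apply (l : List ℕ) : IsCoprime (prodM l 0 1) (prodM l 1 1) := by
  have hdet : prodM l 0 0 * prodM l 1 1 - prodM l 0 1 * prodM l 1 0 = (-1) ^ l.length := by
    rw [← det_fin_two, det_prodM]
  have hsq : ((-1 : ℤ) ^ l.length) ^ 2 = 1 := by rw [← pow_mul, mul_comm, pow_mul]; norm_num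
  refine ⟨-(-1) ^ l.length * prodM l 1 0, (-1) ^ l.length * prodM l 0 0, ?_⟩
  linear_combination (-1) ^ l.length * hdet + hsq

lemma prodM_apply_bounds {l : List ℕ} (hl : ∀ a ∈ l, 1 ≤ a) :
    0 ≤ prodM l 0 1 ∧ prodM l 0 1 ≤ prodM l 1 1 ∧ 0 < prodM l 1 1 := by
  induction l with
  | nil => simp [prodM_nil]
  | cons a l ih =>
    obtain ⟨h01, -, h11⟩ := ih fun b hb => hl b (List.mem_cons_of_mem a hb)
    have ha : (1 : ℤ) ≤ a := by exact_mod_cast hl a List.mem_cons_self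
    rw [prodM_cons_apply_zero_one, prodM_cons_apply_one_one]
    refine ⟨h11.le, ?_, ?_⟩ <;> nlinarith

lemma one_le_prodM_apply_zero_one {l : List ℕ} (hl : ∀ a ∈ l, 1 ≤ a) (hne : l ≠ []) :
    1 ≤ prodM l 0 1 := by
  obtain ⟨a, t, rfl⟩ := List.exists_cons_of_ne_nil hne
  rw [prodM_cons_apply_zero_one]
  exact (prodM_apply_bounds fun b hb => hl b (List.mem_cons_of_mem a hb)).2.2

lemma cf_eq_div {l : List ℕ} (hl : ∀ a ∈ l, 1 ≤ a) :
    cf l = (prodM l 0 1 : ℚ) / prodM l 1 1 := by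
  induction l with
  | nil => simp [cf, prodM_nil]
  | cons a l ih =>
    have hl' : ∀ b ∈ l, 1 ≤ b := fun b hb => hl b (List.mem_cons_of_mem a hb)
    obtain ⟨-, -, h11⟩ := prodM_apply_bounds hl'
    have h11' : (0 : ℚ) < prodM l 1 1 := by exact_mod_cast h11
    rw [cf, ih hl', prodM_cons_apply_zero_one, prodM_cons_apply_one_one]
    push_cast
    field_simp
    ring

lemma prodM_fold_apply_one_one (T G : List ℕ) (c : ℤ) (h00 : prodM G 0 0 = c)
    (hanti : prodM G 0 1 + prodM G 1 0 = 4 * c) (h11 : prodM G 1 1 = 4 * c) :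
    prodM (T ++ G ++ T.reverse) 1 1 = c * prodM (T ++ [1, 1]) 1 1 ^ 2 := by
  have hframe : prodM [1, 1] = !![1, 1; 1, 2] := by decide
  simp only [List.append_assoc, prodM_append, prodM_reverse, hframe, mul_apply, transpose_apply,
    Fin.sum_univ_two, of_apply, cons_val', cons_val_one, cons_val_fin_one, cons_val_zero, mul_one]
  linear_combination
    prodM T 1 0 ^ 2 * h00 + prodM T 1 0 * prodM T 1 1 * hanti + prodM T 1 1 ^ 2 * h11

def HasFramedWord (m : ℕ) : Prop :=
  ∃ S : List ℕ, (∀ a ∈ S, 1 ≤ a ∧ a ≤ 3) ∧ prodM (1 :: 1 :: S ++ [1, 1]) 1 1 = 2 ^ m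

lemma HasFramedWord.fold {m : ℕ} (h : HasFramedWord m) (G : List ℕ)
    (hG : ∀ a ∈ G, 1 ≤ a ∧ a ≤ 3) (k : ℕ) (h00 : prodM G 0 0 = 2 ^ k)
    (hanti : prodM G 0 1 + prodM G 1 0 = 4 * 2 ^ k) (h11 : prodM G 1 1 = 4 * 2 ^ k) :
    HasFramedWord (2 * m + k) := by
  obtain ⟨S, hS, hK⟩ := h
  refine ⟨S ++ G ++ S.reverse, ?_, ?_⟩
  · simp only [List.mem_append, List.mem_reverse]
    rintro a ((ha | ha) | ha)
    exacts [hS a ha, hG a ha, hS a ha]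
  · have hword : 1 :: 1 :: (S ++ G ++ S.reverse) ++ [1, 1] =
        (1 :: 1 :: S) ++ G ++ (1 :: 1 :: S).reverse := by simp
    rw [hword, prodM_fold_apply_one_one _ _ _ h00 hanti h11, hK]
    ring

lemma HasFramedWord.two_mul {m : ℕ} (h : HasFramedWord m) : HasFramedWord (2 * m) :=
  h.fold [1, 3] (by decide) 0 (by decide) (by decide) (by decide)

lemma HasFramedWord.two_mul_add_one {m : ℕ} (h : HasFramedWord m) : HasFramedWord (2 * m + 1) :=
  h.fold [1, 1, 1, 2] (by decide) 1 (by decide) (by decide) (by decide)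

lemma HasFramedWord.two_mul_add_two {m : ℕ} (h : HasFramedWord m) : HasFramedWord (2 * m + 2) :=
  h.fold [1, 1, 3, 2] (by decide) 2 (by decide) (by decide) (by decide)

lemma hasFramedWord_three : HasFramedWord 3 := ⟨[1], by decide, by decide⟩

lemma hasFramedWord_four : HasFramedWord 4 := ⟨[3], by decide, by decide⟩

lemma hasFramedWord_eleven : HasFramedWord 11 :=
  ⟨[2, 1, 1, 3, 3, 2, 1, 1], by decide, by decide⟩

lemma hasFramedWord_of_three_le_of_ne_five {m : ℕ} (h3 : 3 ≤ m) (h5 : m ≠ 5) :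
    HasFramedWord m := by
  induction m using Nat.strong_induction_on with
  | _ m ih =>
    obtain rfl | rfl | rfl | rfl | ⟨hm, hm10, hm11⟩ :
        m = 3 ∨ m = 4 ∨ m = 10 ∨ m = 11 ∨ (6 ≤ m ∧ m ≠ 10 ∧ m ≠ 11) := by omega
    · exact hasFramedWord_three
    · exact hasFramedWord_four
    · exact hasFramedWord_four.two_mul_add_two
    · exact hasFramedWord_eleven
    · obtain ⟨k, rfl | rfl⟩ := Nat.even_or_odd' m
      · exact (ih k (by omega) (by omega) (by omega)).two_mul
      · exact (ih k (by omega) (by omega) (by omega)).two_mul_add_one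

lemma exists_continuant_eq_two_pow (j : ℕ) :
    ∃ W : List ℕ, W ≠ [] ∧ (∀ a ∈ W, 1 ≤ a ∧ a ≤ 3) ∧ prodM W 1 1 = 2 ^ j := by
  obtain rfl | rfl | rfl | rfl | ⟨h3, h5⟩ :
      j = 0 ∨ j = 1 ∨ j = 2 ∨ j = 5 ∨ (3 ≤ j ∧ j ≠ 5) := by omega
  · exact ⟨[1], by decide, by decide, by decide⟩
  · exact ⟨[2], by decide, by decide, by decide⟩
  · exact ⟨[1, 3], by decide, by decide, by decide⟩
  · exact ⟨[1, 3, 1, 1, 3], by decide, by decide, by decide⟩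
  · obtain ⟨S, hS, hK⟩ := hasFramedWord_of_three_le_of_ne_five h3 h5
    refine ⟨_, by simp, ?_, hK⟩
    simp only [List.cons_append, List.forall_mem_cons, List.forall_mem_append]
    exact ⟨by decide, by decide, hS, by decide⟩

theorem stmt_4 (j : ℕ) :
    ∃ p : ℕ, 1 ≤ p ∧ (p < 2 ^ j ∨ (p = 1 ∧ 2 ^ j ≤ 2)) ∧
      Nat.gcd p (2 ^ j) = 1 ∧
      ∃ l : List ℕ, (∀ a ∈ l, 1 ≤ a ∧ a ≤ 3) ∧ cf l = (p : ℚ) / (2 ^ j : ℚ) := by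
  obtain ⟨W, hne, hW, hK⟩ := exists_continuant_eq_two_pow j
  have hW1 : ∀ a ∈ W, 1 ≤ a := fun a ha => (hW a ha).1
  obtain ⟨h01, h01_le, -⟩ := prodM_apply_bounds hW1
  obtain ⟨p, hp⟩ := Int.eq_ofNat_of_zero_le h01
  have hcop : Nat.Coprime p (2 ^ j) := by
    have := isCoprime_prodM_apply W
    rw [hp, hK] at this
    exact Nat.isCoprime_iff_coprime.mp (by exact_mod_cast this)
  have hp1 : 1 ≤ p := by have := one_le_prodM_apply_zero_one hW1 hne; omega
  have hle : p ≤ 2 ^ j := by rw [hp, hK] at h01_le; exact_mod_cast h01_le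
  refine ⟨p, hp1, ?_, hcop, W, hW, ?_⟩
  · rcases hle.lt_or_eq with hlt | rfl
    · exact Or.inl hlt
    · have hone : 2 ^ j = 1 := by simpa [Nat.Coprime] using hcop
      exact Or.inr ⟨hone, by omega⟩
  · simpa [hp, hK] using cf_eq_div hW1
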